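/- arXiv:1812.06929 — 5 statements merged into one kernel-verified Lean document; each statement's English description precedes it below -/
import Mathlib

section
/- For all real numbers x, y > 0, one has -log((x+y)/2) ≤ (-log x - log y)/2 - (x-y)²/(8(x²+y²)). -/
theorem quantitative_log_convexity (x y : ℝ) (hx : 0 < x) (hy : 0 < y) :
    -Real.log ((x + y) / 2) ≤
      (-Real.log x - Real.log y) / 2 - (x - y) ^ 2 / (8 * (x ^ 2 + y ^ 2)) := by
  set u : ℝ := (x + y) ^ 2 / (4 * x * y) with hu
  have hxy : 0 < x + y := by linarith
  have hupos : 0 < u := by positivity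
  -- log u ≥ 1 - 1/u
  have h1 : 1 - 1 / u ≤ Real.log u := by
    have h := Real.log_le_sub_one_of_pos (show (0:ℝ) < 1 / u by positivity)
    rw [Real.log_div one_ne_zero (ne_of_gt hupos), Real.log_one] at h
    linarith
  have h2 : 1 - 1 / u = (x - y) ^ 2 / (x + y) ^ 2 := by
    rw [hu]
    field_simp
    ring
  have h3 : (x - y) ^ 2 / (x + y) ^ 2 ≥ (x - y) ^ 2 / (2 * (x ^ 2 + y ^ 2)) := by
    apply div_le_div_of_nonneg_left (by positivity) (by positivity)
    nlinarith [sq_nonneg (x - y)]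
  have h4 : (x - y) ^ 2 / (2 * (x ^ 2 + y ^ 2)) ≤ Real.log u := by
    rw [h2] at h1; linarith
  -- log u = 2 log((x+y)/2) - log x - log y
  have h5 : Real.log u = 2 * Real.log ((x + y) / 2) - Real.log x - Real.log y := by
    rw [hu, Real.log_div (by positivity) (by positivity),
      Real.log_div (by positivity) two_ne_zero, Real.log_pow,
      show (4:ℝ) * x * y = 2 ^ 2 * (x * y) by ring,
      Real.log_mul (by positivity) (by positivity), Real.log_pow,
      Real.log_mul (ne_of_gt hx) (ne_of_gt hy)]
    push_cast
    ring
  have h6 : (x - y) ^ 2 / (8 * (x ^ 2 + y ^ 2)) =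
      ((x - y) ^ 2 / (2 * (x ^ 2 + y ^ 2))) / 4 := by
    rw [div_div]; ring_nf
  have hq : 0 ≤ (x - y) ^ 2 / (2 * (x ^ 2 + y ^ 2)) := by positivity
  rw [h6]
  linarith
end

section
/- Let n ≥ 1 and let z⁰_1 ≤ ⋯ ≤ z⁰_n and z¹_1 ≤ ⋯ ≤ z¹_n be two increasing n-tuples of distinct reals. Define z^h_i = (z⁰_i + z¹_i)/2 and Int[X] = Σ_{1 ≤ i < j ≤ n} -log|z_i - z_j|. Then Int[X^h] ≤ (Int[X⁰] + Int[X¹])/2 - (1/8) Σ_{i=1}^{n-1} (G_i(X⁰) - G_i(X¹))² / (G_i(X⁰)² + G_i(X¹)²), where G_i(X) = z_{i+1} - z_i denotes the i-th gap. -/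
/-!
Only the distances `z j - z i` enter the energy, and those of the midpoint configuration are the
arithmetic means of the two endpoint distances. Hence the pair interaction is bounded termwise by
the strict convexity of `-log` at two points,
`-log ((a + b) / 2) ≤ (-log a - log b) / 2 - (a - b)² / (8 (a² + b²))`,
which follows from `log u ≥ 1 - 1/u` at `u = ((a + b) / 2)² / (a b)`. Keeping this gain for
consecutive pairs and discarding it for the others gives the theorem.
-/

open Real Finset

lemma sq_sub_div_sq_add_le_log_mean (a b : ℝ) (ha : 0 < a) (hb : 0 < b) :
    (a - b) ^ 2 / (a + b) ^ 2 ≤ 2 * log ((a + b) / 2) - log a - log b := by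
  have h := one_sub_inv_le_log_of_pos (show 0 < ((a + b) / 2) ^ 2 / (a * b) by positivity)
  rw [log_div (by positivity) (by positivity), log_pow, log_mul ha.ne' hb.ne'] at h
  convert h using 1
  · field_simp
    ring
  · push_cast
    ring

lemma sq_sub_div_sq_add_sq_le (a b : ℝ) (hab : a + b ≠ 0) :
    (a - b) ^ 2 / (a ^ 2 + b ^ 2) ≤ 2 * ((a - b) ^ 2 / (a + b) ^ 2) := by
  have hsq : 0 < (a + b) ^ 2 := by positivity
  have hsq' : 0 < a ^ 2 + b ^ 2 := by nlinarith [sq_nonneg (a - b)]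
  rw [mul_div_assoc', div_le_div_iff₀ hsq' hsq]
  nlinarith [sq_nonneg (a - b), sq_nonneg ((a - b) * (a - b))]

lemma neg_log_mean_le (a b : ℝ) (ha : 0 < a) (hb : 0 < b) :
    -log ((a + b) / 2) ≤ (-log a + -log b) / 2 - 1 / 8 * ((a - b) ^ 2 / (a ^ 2 + b ^ 2)) := by
  have h₁ := sq_sub_div_sq_add_le_log_mean a b ha hb
  have h₂ := sq_sub_div_sq_add_sq_le a b (by positivity)
  have h₃ : 0 ≤ (a - b) ^ 2 / (a ^ 2 + b ^ 2) := by positivity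
  linarith

lemma neg_log_abs_midpoint_le {x₀ y₀ x₁ y₁ : ℝ} (h₀ : x₀ < y₀) (h₁ : x₁ < y₁) :
    -log |(x₀ + x₁) / 2 - (y₀ + y₁) / 2| ≤
      (-log |x₀ - y₀| + -log |x₁ - y₁|) / 2 -
        1 / 8 * (((y₀ - x₀) - (y₁ - x₁)) ^ 2 / ((y₀ - x₀) ^ 2 + (y₁ - x₁) ^ 2)) := by
  have hmid : |(x₀ + x₁) / 2 - (y₀ + y₁) / 2| = ((y₀ - x₀) + (y₁ - x₁)) / 2 := by
    rw [abs_of_neg (by linarith)]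
    ring
  rw [hmid, abs_sub_comm x₀, abs_of_pos (sub_pos.2 h₀), abs_sub_comm x₁,
    abs_of_pos (sub_pos.2 h₁)]
  exact neg_log_mean_le _ _ (sub_pos.2 h₀) (sub_pos.2 h₁)

def pairSum (n : ℕ) (F : ℕ → ℕ → ℝ) : ℝ :=
  ∑ i ∈ range n, ∑ j ∈ range n, if i < j then F i j else 0

lemma pairSum_mono {n : ℕ} {F G : ℕ → ℕ → ℝ} (h : ∀ i j, i < j → j < n → F i j ≤ G i j) :
    pairSum n F ≤ pairSum n G := by
  refine sum_le_sum fun i _ => sum_le_sum fun j hj => ?_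
  split_ifs with hij
  · exact h i j hij (mem_range.1 hj)
  · rfl

lemma pairSum_mean_sub (n : ℕ) (F G H : ℕ → ℕ → ℝ) :
    pairSum n (fun i j => (F i j + G i j) / 2 - H i j) =
      (pairSum n F + pairSum n G) / 2 - pairSum n H := by
  simp only [pairSum, ← sum_add_distrib, sum_div, ← sum_sub_distrib]
  refine sum_congr rfl fun i _ => sum_congr rfl fun j _ => ?_
  split_ifs <;> ring

lemma pairSum_adjacent (n : ℕ) (c : ℕ → ℝ) :
    pairSum n (fun i j => if j = i + 1 then c i else 0) = ∑ i ∈ range (n - 1), c i := by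
  have hinner : ∀ i, (∑ j ∈ range n, if i < j then (if j = i + 1 then c i else 0) else 0) =
      if i + 1 < n then c i else 0 := by
    intro i
    have hadj : ∀ j, (if i < j then (if j = i + 1 then c i else 0) else 0) =
        if j = i + 1 then c i else 0 := by
      intro j
      by_cases hj : j = i + 1 <;> simp [hj]
    simp only [hadj, sum_ite_eq', mem_range]
  simp only [pairSum, hinner]
  rcases n with _ | m
  · simp
  · rw [sum_range_succ, if_neg (lt_irrefl _), add_zero, Nat.add_sub_cancel]
    exact sum_congr rfl fun i hi => if_pos (Nat.succ_lt_succ (mem_range.1 hi))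

theorem displacement_convexity_log_energy_general
    (n : ℕ) (z0 z1 : ℕ → ℝ)
    (h0 : ∀ i j, i < j → j < n → z0 i < z0 j)
    (h1 : ∀ i j, i < j → j < n → z1 i < z1 j) :
    (∑ i ∈ Finset.range n, ∑ j ∈ Finset.range n,
        if i < j then -Real.log |(z0 i + z1 i) / 2 - (z0 j + z1 j) / 2| else 0) ≤
      ((∑ i ∈ Finset.range n, ∑ j ∈ Finset.range n,
          if i < j then -Real.log |z0 i - z0 j| else 0) +
        (∑ i ∈ Finset.range n, ∑ j ∈ Finset.range n,
          if i < j then -Real.log |z1 i - z1 j| else 0)) / 2 -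
      (1 / 8) * ∑ i ∈ Finset.range (n - 1),
        ((z0 (i + 1) - z0 i) - (z1 (i + 1) - z1 i)) ^ 2 /
          ((z0 (i + 1) - z0 i) ^ 2 + (z1 (i + 1) - z1 i) ^ 2) := by
  set gain : ℕ → ℕ → ℝ := fun i j =>
    ((z0 j - z0 i) - (z1 j - z1 i)) ^ 2 / ((z0 j - z0 i) ^ 2 + (z1 j - z1 i) ^ 2)
  have termwise : ∀ i j, i < j → j < n →
      -log |(z0 i + z1 i) / 2 - (z0 j + z1 j) / 2| ≤
        (-log |z0 i - z0 j| + -log |z1 i - z1 j|) / 2 -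
          if j = i + 1 then 1 / 8 * gain i (i + 1) else 0 := by
    intro i j hij hj
    have h := neg_log_abs_midpoint_le (h0 i j hij hj) (h1 i j hij hj)
    split_ifs with hadj
    · subst hadj
      exact h
    · have : 0 ≤ gain i j := by positivity
      linarith
  calc pairSum n (fun i j => -log |(z0 i + z1 i) / 2 - (z0 j + z1 j) / 2|)
      ≤ pairSum n (fun i j => (-log |z0 i - z0 j| + -log |z1 i - z1 j|) / 2 -
          if j = i + 1 then 1 / 8 * gain i (i + 1) else 0) := pairSum_mono termwise
    _ = _ := by rw [pairSum_mean_sub, pairSum_adjacent, ← mul_sum]; rfl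

theorem displacement_convexity_log_energy
    (n : ℕ) (hn : 1 ≤ n) (z0 z1 : ℕ → ℝ)
    (h0 : ∀ i j, i < j → j < n → z0 i < z0 j)
    (h1 : ∀ i j, i < j → j < n → z1 i < z1 j) :
    (∑ i ∈ Finset.range n, ∑ j ∈ Finset.range n,
        if i < j then -Real.log |(z0 i + z1 i) / 2 - (z0 j + z1 j) / 2| else 0) ≤
      ((∑ i ∈ Finset.range n, ∑ j ∈ Finset.range n,
          if i < j then -Real.log |z0 i - z0 j| else 0) +
        (∑ i ∈ Finset.range n, ∑ j ∈ Finset.range n,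
          if i < j then -Real.log |z1 i - z1 j| else 0)) / 2 -
      (1 / 8) * ∑ i ∈ Finset.range (n - 1),
        ((z0 (i + 1) - z0 i) - (z1 (i + 1) - z1 i)) ^ 2 /
          ((z0 (i + 1) - z0 i) ^ 2 + (z1 (i + 1) - z1 i) ^ 2) :=
  displacement_convexity_log_energy_general n z0 z1 h0 h1
end

section
/- Let C⁰ and C¹ be two point configurations, each with exactly 2R points in [-R, R], and let C^h be the configuration whose ordered points are the midpoints of the corresponding ordered points of C⁰ and C¹. Then for every r ∈ [-R, R], |Discr_{[-R,r]}(C^h)| ≤ max(|Discr_{[-R,r]}(C⁰)|, |Discr_{[-R,r]}(C¹)|). -/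
/-!
Sublevel sets of monotone sequences are initial segments, hence nested. If `z⁰` and `z¹` are
monotone, the midpoint `(z⁰ᵢ + z¹ᵢ)/2` is `≤ r` whenever both `z⁰ᵢ, z¹ᵢ ≤ r`, and only if one of
them is; so the sublevel set of the midpoints is squeezed between the two nested sublevel sets
of `z⁰` and `z¹`, and its cardinality lies between theirs.
-/

open Finset

theorem Monotone.sublevel_subset_or_sublevel_subset {α β : Type*} [LinearOrder α] [Preorder β]
    {f g : α → β} (hf : Monotone f) (hg : Monotone g) (r : β) :
    {x | f x ≤ r} ⊆ {x | g x ≤ r} ∨ {x | g x ≤ r} ⊆ {x | f x ≤ r} :=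
  ((isLowerSet_Iic r).preimage hf).total ((isLowerSet_Iic r).preimage hg)

theorem Finset.card_filter_between_of_subset_or_subset {α : Type*} (s : Finset α)
    {p q t : α → Prop} [DecidablePred p] [DecidablePred q] [DecidablePred t]
    (hpq : {x | p x} ⊆ {x | q x} ∨ {x | q x} ⊆ {x | p x})
    (hpq_t : ∀ x, p x → q x → t x) (ht_pq : ∀ x, t x → p x ∨ q x) :
    (#(s.filter p) ≤ #(s.filter t) ∧ #(s.filter t) ≤ #(s.filter q)) ∨
      (#(s.filter q) ≤ #(s.filter t) ∧ #(s.filter t) ≤ #(s.filter p)) := by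
  rcases hpq with h | h
  · refine .inl ⟨card_le_card ?_, card_le_card ?_⟩ <;> refine monotone_filter_right s ?_
    · exact fun x _ hx => hpq_t x hx (h hx)
    · exact fun x _ hx => (ht_pq x hx).elim (@h x) id
  · refine .inr ⟨card_le_card ?_, card_le_card ?_⟩ <;> refine monotone_filter_right s ?_
    · exact fun x _ hx => hpq_t x (h hx) hx
    · exact fun x _ hx => (ht_pq x hx).elim id (@h x)

theorem abs_sub_le_max_abs_sub_of_between {α : Type*} [AddCommGroup α] [LinearOrder α]
    [IsOrderedAddMonoid α] {a b m : α} (c : α) (h : (a ≤ m ∧ m ≤ b) ∨ (b ≤ m ∧ m ≤ a)) :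
    |m - c| ≤ max |a - c| |b - c| := by
  rcases h with ⟨ham, hmb⟩ | ⟨hbm, hma⟩
  · exact abs_le_max_abs_abs (sub_le_sub_right ham c) (sub_le_sub_right hmb c)
  · exact max_comm |b - c| |a - c| ▸
      abs_le_max_abs_abs (sub_le_sub_right hbm c) (sub_le_sub_right hma c)

theorem discrepancy_of_midpoint_interpolation_general
    (R : ℕ) (z0 z1 : Fin (2 * R) → ℝ)
    (h0 : Monotone z0) (h1 : Monotone z1)
    (r : ℝ) :
    |((Finset.univ.filter (fun i => (z0 i + z1 i) / 2 ≤ r)).card : ℝ) - (r + R)| ≤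
      max |((Finset.univ.filter (fun i => z0 i ≤ r)).card : ℝ) - (r + R)|
          |((Finset.univ.filter (fun i => z1 i ≤ r)).card : ℝ) - (r + R)| := by
  have hcard := univ.card_filter_between_of_subset_or_subset
    (h0.sublevel_subset_or_sublevel_subset h1 r)
    (t := fun i => (z0 i + z1 i) / 2 ≤ r)
    (fun i h0i h1i => by linarith)
    (fun i hi => by by_contra! h; linarith)
  exact abs_sub_le_max_abs_sub_of_between _ (by exact_mod_cast hcard)

theorem discrepancy_of_midpoint_interpolation
    (R : ℕ) (hR : 0 < R) (z0 z1 : Fin (2 * R) → ℝ)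
    (h0 : Monotone z0) (h1 : Monotone z1)
    (hz0 : ∀ i, z0 i ∈ Set.Icc (-(R : ℝ)) R)
    (hz1 : ∀ i, z1 i ∈ Set.Icc (-(R : ℝ)) R)
    (r : ℝ) (hr : r ∈ Set.Icc (-(R : ℝ)) R) :
    |((Finset.univ.filter (fun i => (z0 i + z1 i) / 2 ≤ r)).card : ℝ) - (r + R)| ≤
      max |((Finset.univ.filter (fun i => z0 i ≤ r)).card : ℝ) - (r + R)|
          |((Finset.univ.filter (fun i => z1 i ≤ r)).card : ℝ) - (r + R)| :=
  discrepancy_of_midpoint_interpolation_general R z0 z1 h0 h1 r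
end

section
/- Let z⁰_1 ≤ ⋯ ≤ z⁰_n and z¹_1 ≤ ⋯ ≤ z¹_n be ordered n-tuples in ℝ and z^h_i = (z⁰_i + z¹_i)/2. For any t ∈ ℝ, min(#{i : z⁰_i ≤ t}, #{i : z¹_i ≤ t}) ≤ #{i : z^h_i ≤ t} ≤ max(#{i : z⁰_i ≤ t}, #{i : z¹_i ≤ t}). -/
theorem midpoint_counting_sandwich (n : ℕ) (z0 z1 : Fin n → ℝ)
    (h0 : Monotone z0) (h1 : Monotone z1) (t : ℝ) :
    min (Finset.univ.filter (fun i => z0 i ≤ t)).card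
        (Finset.univ.filter (fun i => z1 i ≤ t)).card ≤
      (Finset.univ.filter (fun i => (z0 i + z1 i) / 2 ≤ t)).card ∧
    (Finset.univ.filter (fun i => (z0 i + z1 i) / 2 ≤ t)).card ≤
      max (Finset.univ.filter (fun i => z0 i ≤ t)).card
          (Finset.univ.filter (fun i => z1 i ≤ t)).card := by
  set S := Finset.univ.filter (fun i => z0 i ≤ t) with hS
  set T := Finset.univ.filter (fun i => z1 i ≤ t) with hT
  have hmemS : ∀ i, i ∈ S ↔ z0 i ≤ t := by intro i; simp [hS]
  have hmemT : ∀ i, i ∈ T ↔ z1 i ≤ t := by intro i; simp [hT]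
  have hnest : S ⊆ T ∨ T ⊆ S := by
    by_contra h
    push_neg at h
    obtain ⟨a, haS, haT⟩ := Finset.not_subset.1 h.1
    obtain ⟨b, hbT, hbS⟩ := Finset.not_subset.1 h.2
    rw [hmemS] at haS hbS
    rw [hmemT] at haT hbT
    rcases le_total a b with hab | hab
    · exact haT (le_trans (h1 hab) hbT)
    · exact hbS (le_trans (h0 hab) haS)
  rcases hnest with h | h
  · constructor
    · refine le_trans (min_le_left _ _) (Finset.card_le_card ?_)
      intro i hi
      have h0i := (hmemS i).1 hi
      have h1i := (hmemT i).1 (h hi)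
      simp only [Finset.mem_filter, Finset.mem_univ, true_and]
      linarith
    · refine le_trans (Finset.card_le_card ?_) (le_max_right _ _)
      intro i hi
      simp only [Finset.mem_filter, Finset.mem_univ, true_and] at hi
      rw [hmemT]
      by_contra hc
      push_neg at hc
      have : z0 i ≤ t := by linarith
      exact absurd ((hmemT i).1 (h ((hmemS i).2 this))) (not_le.2 hc)
  · constructor
    · refine le_trans (min_le_right _ _) (Finset.card_le_card ?_)
      intro i hi
      have h1i := (hmemT i).1 hi
      have h0i := (hmemS i).1 (h hi)
      simp only [Finset.mem_filter, Finset.mem_univ, true_and]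
      linarith
    · refine le_trans (Finset.card_le_card ?_) (le_max_left _ _)
      intro i hi
      simp only [Finset.mem_filter, Finset.mem_univ, true_and] at hi
      rw [hmemS]
      by_contra hc
      push_neg at hc
      have : z1 i ≤ t := by linarith
      exact absurd ((hmemS i).1 (h ((hmemT i).2 this))) (not_le.2 hc)
end

section
/- Let P⁰ and P¹ be probability measures (point processes) on configurations over [-R,R], let G : Conf × Conf → [0, R] be measurable with 0 ≤ G ≤ R, and suppose every coupling Q of P⁰ and P¹ satisfies E_Q[G] ≥ g·R for some g > 0. Let A, B be events with P⁰(A) ≥ 1 - g/100 and P¹(B) ≥ 1 - g/100, and let Q̃ be any coupling of P⁰(·|A) and P¹(·|B). Then E_{Q̃}[G] ≥ (g/2)·R. -/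
/-!
Outside `A ×ˢ B` use the independent coupling `P⁰ ⊗ P¹`, inside it the rescaled coupling
`P⁰(A) P¹(B) • Q̃`. The latter has the same marginals as `P⁰|_A ⊗ P¹|_B = (P⁰ ⊗ P¹)|_{A ×ˢ B}`,
so the glued measure is a coupling of `P⁰` and `P¹`. Its `G`-expectation is at most
`R · (P⁰ ⊗ P¹)((A ×ˢ B)ᶜ) + E_{Q̃}[G] ≤ R g / 50 + E_{Q̃}[G]`, and it is at least `g R`.
-/

open MeasureTheory ProbabilityTheory

namespace ProbabilityTheory

variable {α β : Type*} [MeasurableSpace α] [MeasurableSpace β]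
  {μ : Measure α} {ν : Measure β} {A : Set α} {B : Set β} {Q : Measure (α × β)}

noncomputable def liftCondCoupling (μ : Measure α) (ν : Measure β) (A : Set α) (B : Set β)
    (Q : Measure (α × β)) : Measure (α × β) :=
  (μ.prod ν).restrict (A ×ˢ B)ᶜ + (μ A * ν B) • Q

lemma map_fst_smul_eq_map_fst_prod_restrict [IsFiniteMeasure μ] [SFinite ν]
    (hQ : Q.map Prod.fst = μ[|A]) :
    ((μ A * ν B) • Q).map Prod.fst = ((μ.restrict A).prod (ν.restrict B)).map Prod.fst := by
  rw [Measure.map_smul, hQ, Measure.map_fst_prod, Measure.restrict_apply_univ]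
  rcases eq_or_ne (μ A) 0 with hA0 | hA0
  · simp [hA0, Measure.restrict_eq_zero.mpr hA0]
  · rw [cond, smul_smul, mul_comm (μ A), ENNReal.mul_inv_cancel_right hA0 (measure_ne_top μ A)]

lemma map_snd_smul_eq_map_snd_prod_restrict [SFinite μ] [IsFiniteMeasure ν]
    (hQ : Q.map Prod.snd = ν[|B]) :
    ((μ A * ν B) • Q).map Prod.snd = ((μ.restrict A).prod (ν.restrict B)).map Prod.snd := by
  rw [Measure.map_smul, hQ, Measure.map_snd_prod, Measure.restrict_apply_univ]
  rcases eq_or_ne (ν B) 0 with hB0 | hB0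
  · simp [hB0, Measure.restrict_eq_zero.mpr hB0]
  · rw [cond, smul_smul, ENNReal.mul_inv_cancel_right hB0 (measure_ne_top ν B)]

lemma map_fst_liftCondCoupling [IsFiniteMeasure μ] [IsProbabilityMeasure ν]
    (hA : MeasurableSet A) (hB : MeasurableSet B) (hQ : Q.map Prod.fst = μ[|A]) :
    (liftCondCoupling μ ν A B Q).map Prod.fst = μ := by
  rw [liftCondCoupling, Measure.map_add _ _ measurable_fst,
    map_fst_smul_eq_map_fst_prod_restrict hQ, ← Measure.map_add _ _ measurable_fst,
    Measure.prod_restrict, add_comm,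
    Measure.restrict_add_restrict_compl (hA.prod hB),
    Measure.map_fst_prod, measure_univ, one_smul]

lemma map_snd_liftCondCoupling [IsProbabilityMeasure μ] [IsFiniteMeasure ν]
    (hA : MeasurableSet A) (hB : MeasurableSet B) (hQ : Q.map Prod.snd = ν[|B]) :
    (liftCondCoupling μ ν A B Q).map Prod.snd = ν := by
  rw [liftCondCoupling, Measure.map_add _ _ measurable_snd,
    map_snd_smul_eq_map_snd_prod_restrict hQ, ← Measure.map_add _ _ measurable_snd,
    Measure.prod_restrict, add_comm,
    Measure.restrict_add_restrict_compl (hA.prod hB),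
    Measure.map_snd_prod, measure_univ, one_smul]

lemma isProbabilityMeasure_liftCondCoupling [IsProbabilityMeasure μ] [IsProbabilityMeasure ν]
    (hA : MeasurableSet A) (hB : MeasurableSet B) (hQ : Q.map Prod.fst = μ[|A]) :
    IsProbabilityMeasure (liftCondCoupling μ ν A B Q) := by
  have : IsProbabilityMeasure ((liftCondCoupling μ ν A B Q).map Prod.fst) := by
    rw [map_fst_liftCondCoupling hA hB hQ]
    infer_instance
  exact Measure.isProbabilityMeasure_of_map Prod.fst

lemma measureReal_prod_compl_le (μ : Measure α) (ν : Measure β) [IsProbabilityMeasure μ]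
    [IsProbabilityMeasure ν] (A : Set α) (B : Set β) :
    (μ.prod ν).real (A ×ˢ B)ᶜ ≤ μ.real Aᶜ + ν.real Bᶜ := by
  calc (μ.prod ν).real (A ×ˢ B)ᶜ
      ≤ (μ.prod ν).real (Aᶜ ×ˢ Set.univ) + (μ.prod ν).real (Set.univ ×ˢ Bᶜ) := by
        rw [Set.compl_prod_eq_union]
        exact measureReal_union_le _ _
    _ = μ.real Aᶜ + ν.real Bᶜ := by
        simp only [measureReal_prod_prod, probReal_univ, mul_one, one_mul]

lemma integral_liftCondCoupling_le [IsProbabilityMeasure μ] [IsProbabilityMeasure ν]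
    [IsFiniteMeasure Q] {G : α × β → ℝ} {R : ℝ} (hG : Measurable G) (hG0 : ∀ p, 0 ≤ G p)
    (hGR : ∀ p, G p ≤ R) :
    ∫ p, G p ∂(liftCondCoupling μ ν A B Q) ≤ R * (μ.prod ν).real (A ×ˢ B)ᶜ + ∫ p, G p ∂Q := by
  have hGnorm (p : α × β) : ‖G p‖ ≤ R := by rw [Real.norm_of_nonneg (hG0 p)]; exact hGR p
  have hint (ρ : Measure (α × β)) [IsFiniteMeasure ρ] : Integrable G ρ :=
    .of_bound hG.aestronglyMeasurable R (ae_of_all _ hGnorm)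
  have hout : ∫ p in (A ×ˢ B)ᶜ, G p ∂(μ.prod ν) ≤ R * (μ.prod ν).real (A ×ˢ B)ᶜ :=
    (Real.le_norm_self _).trans
      (norm_setIntegral_le_of_norm_le_const (measure_lt_top _ _) fun p _ => hGnorm p)
  have hin : (μ A * ν B).toReal * ∫ p, G p ∂Q ≤ ∫ p, G p ∂Q := by
    rw [ENNReal.toReal_mul]
    exact mul_le_of_le_one_left (integral_nonneg hG0)
      (mul_le_one₀ measureReal_le_one measureReal_nonneg measureReal_le_one)
  have hsmul : Integrable G ((μ A * ν B) • Q) :=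
    (hint Q).smul_measure (ENNReal.mul_ne_top (measure_ne_top μ A) (measure_ne_top ν B))
  rw [liftCondCoupling, integral_add_measure (hint _) hsmul, integral_smul_measure,
    smul_eq_mul]
  exact add_le_add hout hin

end ProbabilityTheory

theorem coupling_gain_transfer
    {Ω : Type*} [MeasurableSpace Ω]
    (P0 P1 : Measure Ω) [IsProbabilityMeasure P0] [IsProbabilityMeasure P1]
    (R g : ℝ) (hg : 0 < g)
    (G : Ω × Ω → ℝ) (hGmeas : Measurable G)
    (hG0 : ∀ p, 0 ≤ G p) (hGR : ∀ p, G p ≤ R)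
    (hlow : ∀ Q : Measure (Ω × Ω), IsProbabilityMeasure Q →
      Q.map Prod.fst = P0 → Q.map Prod.snd = P1 → g * R ≤ ∫ p, G p ∂Q)
    (A B : Set Ω) (hA : MeasurableSet A) (hB : MeasurableSet B)
    (hPA : 1 - g / 100 ≤ (P0 A).toReal) (hPB : 1 - g / 100 ≤ (P1 B).toReal)
    (Q' : Measure (Ω × Ω)) [IsProbabilityMeasure Q']
    (hQ'1 : Q'.map Prod.fst = P0[|A]) (hQ'2 : Q'.map Prod.snd = P1[|B]) :
    g / 2 * R ≤ ∫ p, G p ∂Q' := by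
  obtain ⟨ω⟩ := nonempty_of_isProbabilityMeasure P0
  have hR : 0 ≤ R := (hG0 (ω, ω)).trans (hGR (ω, ω))
  have hgain : g * R ≤ ∫ p, G p ∂(liftCondCoupling P0 P1 A B Q') :=
    hlow _ (isProbabilityMeasure_liftCondCoupling hA hB hQ'1)
      (map_fst_liftCondCoupling hA hB hQ'1) (map_snd_liftCondCoupling hA hB hQ'2)
  have hlift : ∫ p, G p ∂(liftCondCoupling P0 P1 A B Q') ≤
      R * (P0.prod P1).real (A ×ˢ B)ᶜ + ∫ p, G p ∂Q' :=
    integral_liftCondCoupling_le hGmeas hG0 hGR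
  have hout : (P0.prod P1).real (A ×ˢ B)ᶜ ≤ g / 50 := by
    have := measureReal_prod_compl_le P0 P1 A B
    rw [probReal_compl_eq_one_sub hA, probReal_compl_eq_one_sub hB] at this
    rw [← measureReal_def] at hPA hPB
    linarith
  linarith [mul_le_mul_of_nonneg_left hout hR, mul_nonneg hg.le hR]
end
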